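/- arXiv:1506.01871 — 3 statements merged into one kernel-verified Lean document; each statement's English description precedes it below -/
import Mathlib

section
/- Any s-sparse exponential sum is determined by its values on 2s points in geometric-progression position: if P(x) = Σ_{k∈K} c_k x^k and Q(x) = Σ_{k∈K'} d_k x^k are Laurent polynomials (K, K' ⊂ Z finite) with #K ≤ s, #K' ≤ s, and P(z^n) = Q(z^n) for 2s distinct values z^{n} with n ∈ {0,1,...,2s-1}, where z ∈ C has the property that the powers z^k, k ∈ K ∪ K', are pairwise distinct, then P = Q (same supports and coefficients). -/
open Complex

/-! The difference `c - d` is supported on `T = K ∪ K'`, a set of at most `2s` exponents, and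
the hypothesis says that its first `2s` power sums against the nodes `z ^ k`, `k ∈ T`, vanish.
These nodes are distinct, so the Vandermonde matrix they span is invertible and `c - d = 0`. -/

open Finset

theorem Finset.eq_zero_of_forall_pow_sum_mul_pow_eq_zero {R ι : Type*} [CommRing R] [IsDomain R]
    {T : Finset ι} {x a : ι → R} (hx : Set.InjOn x T)
    (h : ∀ n < #T, ∑ k ∈ T, a k * x k ^ n = 0) : ∀ k ∈ T, a k = 0 := by
  intro k hk
  let e : Fin #T ≃ T := T.equivFin.symm
  have he : Function.Injective fun i ↦ x (e i) := fun i j hij ↦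
    e.injective (Subtype.ext (hx (e i).2 (e j).2 hij))
  have hzero := Matrix.eq_zero_of_forall_pow_sum_mul_pow_eq_zero (v := fun i ↦ a (e i)) he
    fun i ↦ by
      rw [← h i i.2, ← T.sum_coe_sort]
      exact e.sum_comp fun j : T ↦ a j * x j ^ (i : ℕ)
  simpa [e] using congrFun hzero (T.equivFin ⟨k, hk⟩)

/-- An `s`-sparse Laurent polynomial is determined by its values at `2s` points in
geometric progression `z^0, z^1, …, z^{2s-1}`, provided the powers `z^k` are pairwise
distinct for `k` ranging over the union of the supports. -/
theorem sparse_wavelet_stmt2 (s : ℕ) (z : ℂ) (K K' : Finset ℤ) (c d : ℤ → ℂ)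
    (hcK : ∀ k, c k ≠ 0 → k ∈ K) (hdK' : ∀ k, d k ≠ 0 → k ∈ K')
    (hKs : K.card ≤ s) (hK's : K'.card ≤ s)
    (hz : Set.InjOn (fun k : ℤ => z ^ k) (↑K ∪ ↑K'))
    (hagree : ∀ n ∈ Finset.range (2 * s),
      ∑ k ∈ K, c k * (z ^ (n : ℕ)) ^ k = ∑ k ∈ K', d k * (z ^ (n : ℕ)) ^ k) :
    c = d := by
  set T := K ∪ K'
  have hc : ∀ k ∉ K, c k = 0 := fun k ↦ not_imp_comm.1 (hcK k)
  have hd : ∀ k ∉ K', d k = 0 := fun k ↦ not_imp_comm.1 (hdK' k)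
  have hsumK (w : ℂ) : ∑ k ∈ K, c k * w ^ k = ∑ k ∈ T, c k * w ^ k :=
    sum_subset subset_union_left fun k _ hk ↦ by rw [hc k hk, zero_mul]
  have hsumK' (w : ℂ) : ∑ k ∈ K', d k * w ^ k = ∑ k ∈ T, d k * w ^ k :=
    sum_subset subset_union_right fun k _ hk ↦ by rw [hd k hk, zero_mul]
  have hvanish : ∀ k ∈ T, (c - d) k = 0 := by
    refine eq_zero_of_forall_pow_sum_mul_pow_eq_zero (x := fun k ↦ z ^ k) (by simpa [T] using hz)
      fun n hn ↦ ?_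
    have hn' : n ∈ range (2 * s) := mem_range.2 <| hn.trans_le <|
      (card_union_le K K').trans (by omega)
    simp_rw [Pi.sub_apply, sub_mul, sum_sub_distrib, ← zpow_natCast, zpow_comm z _ (n : ℤ),
      zpow_natCast, ← hsumK, ← hsumK', hagree n hn', sub_self]
  funext k
  by_cases hk : k ∈ T
  · exact sub_eq_zero.1 (hvanish k hk)
  · rw [hc k (hk <| mem_union_left _ ·), hd k (hk <| mem_union_right _ ·)]
end

section
/- Let h = (h_1,...,h_n) ∈ R^n with 1, h_1,...,h_n linearly independent over Q. Then any n-dimensional trigonometric polynomial P(ξ) = Σ_{k∈Z^n} p(k) e^{-i k·ξ} whose coefficient support has cardinality at most s is uniquely determined by its values on the 2s points Θ_s = {(-s+1/2)πh, (-s+3/2)πh, ..., (s-1/2)πh}: if two such s-sparse trigonometric polynomials agree on Θ_s, they are equal. -/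
open Complex Real

/-- An `s`-sparse multivariate trigonometric polynomial is uniquely determined by its
values at the `2s` half-integer multiples of `πh`, provided `1, h₁, …, hₙ` are
linearly independent over `ℚ`. -/
theorem sparse_wavelet_stmt3 (n s : ℕ) (h : Fin n → ℝ)
    (hindep : ∀ (q₀ : ℚ) (q : Fin n → ℚ),
      (q₀ : ℝ) + ∑ i, (q i : ℝ) * h i = 0 → q₀ = 0 ∧ ∀ i, q i = 0)
    (p q : (Fin n → ℤ) →₀ ℂ)
    (hp : p.support.card ≤ s) (hq : q.support.card ≤ s)
    (hagree : ∀ m : Fin (2 * s),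
      ∑ k ∈ p.support, p k *
          Complex.exp (-Complex.I * ∑ i, (k i : ℂ) * (((((m : ℕ) : ℝ) - s + 1 / 2) * Real.pi * h i : ℝ) : ℂ)) =
        ∑ k ∈ q.support, q k *
          Complex.exp (-Complex.I * ∑ i, (k i : ℂ) * (((((m : ℕ) : ℝ) - s + 1 / 2) * Real.pi * h i : ℝ) : ℂ))) :
    p = q := by
  classical
  -- the real frequency associated to k
  set a : (Fin n → ℤ) → ℝ := fun k => ∑ i, (k i : ℝ) * h i with ha
  have hIpi : (-Complex.I * (Real.pi : ℂ)) ≠ 0 := by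
    simp [Complex.I_ne_zero, Complex.ofReal_ne_zero, Real.pi_ne_zero]
  -- distinctness of the nodes
  have hinj : ∀ k k' : Fin n → ℤ,
      Complex.exp (-Complex.I * (Real.pi : ℂ) * (a k : ℂ)) =
      Complex.exp (-Complex.I * (Real.pi : ℂ) * (a k' : ℂ)) → k = k' := by
    intro k k' hkk'
    rw [Complex.exp_eq_exp_iff_exists_int] at hkk'
    obtain ⟨j, hj⟩ := hkk'
    have hc : (-Complex.I * (Real.pi : ℂ)) * (a k : ℂ)
        = (-Complex.I * (Real.pi : ℂ)) * ((a k' : ℂ) - 2 * j) := by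
      rw [hj]; ring
    have hc2 : (a k : ℂ) = (a k' : ℂ) - 2 * j := mul_left_cancel₀ hIpi hc
    have hr : a k = a k' - 2 * j := by exact_mod_cast hc2
    have h0 : ((2 * j : ℚ) : ℝ) + ∑ i, (((k i - k' i : ℤ) : ℚ) : ℝ) * h i = 0 := by
      have : ∑ i, (((k i - k' i : ℤ) : ℚ) : ℝ) * h i = a k - a k' := by
        rw [ha]
        rw [← Finset.sum_sub_distrib]
        apply Finset.sum_congr rfl
        intro i _
        push_cast
        ring
      rw [this, hr]
      push_cast
      ring
    obtain ⟨-, h2⟩ := hindep (2 * j) (fun i => ((k i - k' i : ℤ) : ℚ)) h0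
    funext i
    have := h2 i
    have : ((k i - k' i : ℤ) : ℚ) = 0 := this
    have : k i - k' i = 0 := by exact_mod_cast this
    omega
  -- the difference
  set c : (Fin n → ℤ) →₀ ℂ := p - q with hc
  set S : Finset (Fin n → ℤ) := c.support with hS
  set N : ℕ := S.card with hN
  have hNle : N ≤ 2 * s := by
    calc N ≤ (p.support ∪ q.support).card :=
          Finset.card_le_card Finsupp.support_sub
      _ ≤ p.support.card + q.support.card := Finset.card_union_le _ _
      _ ≤ 2 * s := by omega
  -- rewrite the exponential
  have hexp : ∀ (m : ℕ) (k : Fin n → ℤ),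
      Complex.exp (-Complex.I * ∑ i, (k i : ℂ) * (((((m : ℕ) : ℝ) - s + 1 / 2) * Real.pi * h i : ℝ) : ℂ))
      = Complex.exp (-Complex.I * (Real.pi : ℂ) * (a k : ℂ)) ^ m *
        Complex.exp (-Complex.I * ((- (s : ℂ) + 1 / 2) * (Real.pi : ℂ)) * (a k : ℂ)) := by
    intro m k
    rw [← Complex.exp_nat_mul, ← Complex.exp_add]
    congr 1
    have : ∑ i, (k i : ℂ) * (((((m : ℕ) : ℝ) - s + 1 / 2) * Real.pi * h i : ℝ) : ℂ)
        = (((m : ℕ) : ℂ) - s + 1 / 2) * (Real.pi : ℂ) * (a k : ℂ) := by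
      rw [ha]
      push_cast
      rw [Finset.mul_sum]
      apply Finset.sum_congr rfl
      intro i _
      ring
    rw [this]
    ring
  -- agreement implies vanishing of the c-sums
  have hvanish : ∀ m : Fin (2 * s),
      ∑ k ∈ S, c k *
        (Complex.exp (-Complex.I * (Real.pi : ℂ) * (a k : ℂ)) ^ (m : ℕ) *
          Complex.exp (-Complex.I * ((- (s : ℂ) + 1 / 2) * (Real.pi : ℂ)) * (a k : ℂ))) = 0 := by
    intro m
    set E : (Fin n → ℤ) → ℂ := fun k =>
      Complex.exp (-Complex.I * (Real.pi : ℂ) * (a k : ℂ)) ^ (m : ℕ) *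
        Complex.exp (-Complex.I * ((- (s : ℂ) + 1 / 2) * (Real.pi : ℂ)) * (a k : ℂ)) with hE
    set T : Finset (Fin n → ℤ) := p.support ∪ q.support with hT
    have hagree' := hagree m
    simp only [hexp (m : ℕ)] at hagree'
    have hpT : ∑ k ∈ p.support, p k * E k = ∑ k ∈ T, p k * E k := by
      apply Finset.sum_subset Finset.subset_union_left
      intro k _ hk
      rw [Finsupp.notMem_support_iff.mp hk, zero_mul]
    have hqT : ∑ k ∈ q.support, q k * E k = ∑ k ∈ T, q k * E k := by
      apply Finset.sum_subset Finset.subset_union_right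
      intro k _ hk
      rw [Finsupp.notMem_support_iff.mp hk, zero_mul]
    have hTsum : ∑ k ∈ T, (p k - q k) * E k = 0 := by
      rw [← sub_eq_zero] at hagree'
      rw [← hagree']
      rw [hpT, hqT, ← Finset.sum_sub_distrib]
      apply Finset.sum_congr rfl
      intro k _
      ring
    have hST : S ⊆ T := Finsupp.support_sub
    have : ∑ k ∈ S, c k * E k = ∑ k ∈ T, c k * E k := by
      apply Finset.sum_subset hST
      intro k _ hk
      rw [Finsupp.notMem_support_iff.mp hk, zero_mul]
    rw [this]
    rw [← hTsum]
    apply Finset.sum_congr rfl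
    intro k _
    rw [hc]
    simp [Finsupp.sub_apply]
  -- set up Vandermonde
  have e : Fin N ≃ {x // x ∈ S} := S.equivFin.symm
  set f : Fin N → ℂ := fun j => Complex.exp (-Complex.I * (Real.pi : ℂ) * (a ((e j) : Fin n → ℤ) : ℂ)) with hf
  set v : Fin N → ℂ := fun j => c ((e j) : Fin n → ℤ) *
      Complex.exp (-Complex.I * ((- (s : ℂ) + 1 / 2) * (Real.pi : ℂ)) * (a ((e j) : Fin n → ℤ) : ℂ)) with hv
  have hfinj : Function.Injective f := by
    intro j j' hjj'
    have := hinj _ _ hjj'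
    have : (e j : Fin n → ℤ) = (e j' : Fin n → ℤ) := this
    exact e.injective (Subtype.ext this)
  have hvzero : v = 0 := by
    apply Matrix.eq_zero_of_forall_pow_sum_mul_pow_eq_zero hfinj
    intro i
    have hi2s : (i : ℕ) < 2 * s := lt_of_lt_of_le i.2 hNle
    have hv0 := hvanish ⟨(i : ℕ), hi2s⟩
    simp only [Fin.val_mk] at hv0
    rw [← hv0]
    rw [← Finset.sum_attach S (fun k => c k *
      (Complex.exp (-Complex.I * (Real.pi : ℂ) * (a k : ℂ)) ^ (i : ℕ) *
        Complex.exp (-Complex.I * ((- (s : ℂ) + 1 / 2) * (Real.pi : ℂ)) * (a k : ℂ))))]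
    rw [Finset.attach_eq_univ]
    apply Fintype.sum_equiv e
    intro j
    rw [hv, hf]
    ring
  -- conclude
  have hSempty : S = ∅ := by
    by_contra hne
    obtain ⟨k, hk⟩ := Finset.nonempty_iff_ne_empty.mpr hne
    have hj : ∃ j : Fin N, (e j : Fin n → ℤ) = k := ⟨e.symm ⟨k, hk⟩, by simp⟩
    obtain ⟨j, hj⟩ := hj
    have := congrFun hvzero j
    rw [hv] at this
    simp only [Pi.zero_apply, hj] at this
    rcases mul_eq_zero.mp this with h1 | h2
    · exact Finsupp.mem_support_iff.mp hk h1
    · exact Complex.exp_ne_zero _ h2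
  have : c = 0 := Finsupp.support_eq_empty.mp hSempty
  rw [hc] at this
  exact sub_eq_zero.mp this
end

section
/- Let f(ξ) = Σ_{k∈K} c_k e^{-i k·ξ} with K ⊂ Z^n finite, #K = s, and all c_k ≠ 0. Let h ∈ R^n be such that the numbers e^{-iπ k·h}, k ∈ K, are pairwise distinct. Then K and the coefficients (c_k) are uniquely determined by the 2s values f(nπh), n ∈ {-s+1/2, -s+3/2, ..., s-1/2}: any other such sparse trigonometric polynomial with at most s nonzero coefficients agreeing with f at these points equals f. -/
open Complex Real

open Polynomial in
lemma vdm_null_aux {α : Type*} [DecidableEq α] {T : Finset α} {z a : α → ℂ} {N : ℕ}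
    (hinj : Set.InjOn z T) (hcard : T.card ≤ N)
    (hm : ∀ j < N, ∑ k ∈ T, a k * z k ^ j = 0) :
    ∀ k ∈ T, a k = 0 := by
  intro t0 ht0
  set q : Polynomial ℂ := ∏ u ∈ T.erase t0, (X - C (z u)) with hq
  have hqdeg : q.natDegree = (T.erase t0).card := by
    rw [hq, Polynomial.natDegree_prod _ _ (fun u _ => X_sub_C_ne_zero _)]
    simp [natDegree_X_sub_C]
  have hdegN : q.natDegree < N := by
    rw [hqdeg, Finset.card_erase_of_mem ht0]
    have := Finset.card_pos.mpr ⟨t0, ht0⟩; omega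
  have hsum : ∑ t ∈ T, a t * q.eval (z t) = 0 := by
    have heval : ∀ t, q.eval (z t) = ∑ i ∈ Finset.range N, q.coeff i * z t ^ i :=
      fun t => Polynomial.eval_eq_sum_range' hdegN (z t)
    calc ∑ t ∈ T, a t * q.eval (z t)
        = ∑ i ∈ Finset.range N, q.coeff i * ∑ t ∈ T, a t * z t ^ i := by
          simp_rw [heval, Finset.mul_sum]
          rw [Finset.sum_comm]
          congr 1; ext i; congr 1; ext t; ring
      _ = 0 := by
          apply Finset.sum_eq_zero
          intro i hi
          rw [hm i (Finset.mem_range.mp hi), mul_zero]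
  have hzero : ∀ t ∈ T.erase t0, a t * q.eval (z t) = 0 := by
    intro t ht
    rw [hq, Polynomial.eval_prod]
    rw [Finset.prod_eq_zero ht (by simp)]
    ring
  have hsum' : a t0 * q.eval (z t0) = 0 := by
    rw [← Finset.add_sum_erase T _ ht0] at hsum
    rwa [Finset.sum_eq_zero hzero, add_zero] at hsum
  have hqne : q.eval (z t0) ≠ 0 := by
    rw [hq, Polynomial.eval_prod]
    apply Finset.prod_ne_zero_iff.mpr
    intro u hu
    simp only [eval_sub, eval_X, eval_C, sub_ne_zero]
    intro heq
    exact (Finset.ne_of_mem_erase hu)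
      (hinj (Finset.mem_coe.mpr (Finset.mem_of_mem_erase hu)) (Finset.mem_coe.mpr ht0) heq.symm)
  exact (mul_eq_zero.mp hsum').resolve_right hqne

/-- A sparse trigonometric polynomial `f(ξ) = ∑_{k∈K} c_k e^{-i k·ξ}` with `#K = s`,
all `c_k ≠ 0`, and `e^{-iπ k·h}` pairwise distinct, is uniquely determined among
`s`-sparse trigonometric polynomials by its values at the `2s` half-integer points
`nπh`, `n ∈ {-s+1/2, …, s-1/2}`. -/
theorem sparse_wavelet_stmt13 (n s : ℕ) (h : Fin n → ℝ)
    (K K' : Finset (Fin n → ℤ)) (c d : (Fin n → ℤ) → ℂ)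
    (hKcard : K.card = s) (hK'card : K'.card ≤ s)
    (hc : ∀ k, c k ≠ 0 ↔ k ∈ K) (hd : ∀ k, d k ≠ 0 → k ∈ K')
    (hdist : Set.InjOn (fun k : Fin n → ℤ =>
        Complex.exp (-Complex.I * (Real.pi : ℂ) * ((∑ i, (k i : ℝ) * h i : ℝ) : ℂ)))
      (↑K ∪ ↑K'))
    (hagree : ∀ m : Fin (2 * s),
      ∑ k ∈ K, c k *
          Complex.exp (-Complex.I *
            ((∑ i, (k i : ℝ) * ((((m : ℕ) : ℝ) - s + 1 / 2) * Real.pi * h i) : ℝ) : ℂ)) =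
        ∑ k ∈ K', d k *
          Complex.exp (-Complex.I *
            ((∑ i, (k i : ℝ) * ((((m : ℕ) : ℝ) - s + 1 / 2) * Real.pi * h i) : ℝ) : ℂ))) :
    c = d := by
  classical
  set A : (Fin n → ℤ) → ℝ := fun k => ∑ i, (k i : ℝ) * h i with hA
  set z : (Fin n → ℤ) → ℂ := fun k => Complex.exp (-Complex.I * (Real.pi : ℂ) * ((A k : ℝ) : ℂ)) with hz
  set w : (Fin n → ℤ) → ℂ := fun k => Complex.exp (-Complex.I * ((Real.pi : ℂ) / 2) * ((A k : ℝ) : ℂ)) with hw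
  have hzne : ∀ k, z k ≠ 0 := fun k => Complex.exp_ne_zero _
  have hwne : ∀ k, w k ≠ 0 := fun k => Complex.exp_ne_zero _
  -- key rewriting of the exponential at half-integer points
  have key : ∀ (k : Fin n → ℤ) (j : ℕ),
      Complex.exp (-Complex.I *
        ((∑ i, (k i : ℝ) * ((((j : ℝ)) - s + 1 / 2) * Real.pi * h i) : ℝ) : ℂ)) =
      z k ^ ((j : ℤ) - s) * w k := by
    intro k j
    have hAeq : (∑ i, (k i : ℝ) * ((((j : ℝ)) - s + 1 / 2) * Real.pi * h i))
        = (((j : ℝ)) - s + 1 / 2) * Real.pi * A k := by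
      rw [hA, Finset.mul_sum]
      exact Finset.sum_congr rfl (fun i _ => by ring)
    rw [hAeq]
    have : (-Complex.I * (((((j : ℝ)) - s + 1 / 2) * Real.pi * A k : ℝ) : ℂ))
        = (((j : ℤ) - s : ℤ) : ℂ) * (-Complex.I * (Real.pi : ℂ) * ((A k : ℝ) : ℂ))
          + (-Complex.I * ((Real.pi : ℂ) / 2) * ((A k : ℝ) : ℂ)) := by
      push_cast
      ring
    rw [this, Complex.exp_add, Complex.exp_int_mul, hz, hw]
  set T : Finset (Fin n → ℤ) := K ∪ K' with hT
  set a : (Fin n → ℤ) → ℂ := fun k => (c k - d k) * w k * z k ^ (-(s : ℤ)) with ha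
  have hczero : ∀ k ∉ K, c k = 0 := fun k hk => by
    by_contra hne; exact hk ((hc k).mp hne)
  have hdzero : ∀ k ∉ K', d k = 0 := fun k hk => by
    by_contra hne; exact hk (hd k hne)
  have hm : ∀ j < 2 * s, ∑ k ∈ T, a k * z k ^ j = 0 := by
    intro j hj
    have hag := hagree ⟨j, hj⟩
    simp only [key] at hag
    have hcs : ∑ k ∈ K, c k * (z k ^ ((j : ℤ) - s) * w k)
        = ∑ k ∈ T, c k * (z k ^ ((j : ℤ) - s) * w k) := by
      apply Finset.sum_subset (Finset.subset_union_left)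
      intro x _ hx
      rw [hczero x hx, zero_mul]
    have hds : ∑ k ∈ K', d k * (z k ^ ((j : ℤ) - s) * w k)
        = ∑ k ∈ T, d k * (z k ^ ((j : ℤ) - s) * w k) := by
      apply Finset.sum_subset (Finset.subset_union_right)
      intro x _ hx
      rw [hdzero x hx, zero_mul]
    rw [hcs, hds] at hag
    have : ∑ k ∈ T, ((c k - d k) * (z k ^ ((j : ℤ) - s) * w k)) = 0 := by
      simp_rw [sub_mul]
      rw [Finset.sum_sub_distrib, hag, sub_self]
    calc ∑ k ∈ T, a k * z k ^ j
        = ∑ k ∈ T, ((c k - d k) * (z k ^ ((j : ℤ) - s) * w k)) := by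
          apply Finset.sum_congr rfl
          intro k _
          rw [ha]
          have hzp : z k ^ (-(s : ℤ)) * z k ^ (j : ℕ) = z k ^ ((j : ℤ) - s) := by
            rw [← zpow_natCast (z k) j, ← zpow_add₀ (hzne k)]
            congr 1; omega
          calc (c k - d k) * w k * z k ^ (-(s : ℤ)) * z k ^ j
              = (c k - d k) * w k * (z k ^ (-(s : ℤ)) * z k ^ (j : ℕ)) := by ring
            _ = (c k - d k) * (z k ^ ((j : ℤ) - s) * w k) := by rw [hzp]; ring
      _ = 0 := this
  have hinj : Set.InjOn z ↑T := by
    rw [hT, Finset.coe_union]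
    exact hdist
  have hcard : T.card ≤ 2 * s := by
    calc T.card ≤ K.card + K'.card := Finset.card_union_le _ _
      _ ≤ 2 * s := by omega
  have hzeroall := vdm_null_aux hinj hcard hm
  funext k
  by_cases hk : k ∈ T
  · have := hzeroall k hk
    rw [ha] at this
    have h1 : c k - d k = 0 := by
      rcases mul_eq_zero.mp this with h2 | h2
      · rcases mul_eq_zero.mp h2 with h3 | h3
        · exact h3
        · exact absurd h3 (hwne k)
      · exact absurd h2 (zpow_ne_zero _ (hzne k))
    exact sub_eq_zero.mp h1
  · rw [hT, Finset.mem_union] at hk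
    push_neg at hk
    rw [hczero k hk.1, hdzero k hk.2]
end
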